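/- arXiv:1707.05133 — 5 statements merged into one kernel-verified Lean document; each statement's English description precedes it below -/
import Mathlib

section
/- Let A be an m×n integer matrix of rank r with r ≥ 1. Then the quotient group (Fin m → ℤ) / range(A.mulVecLin) is torsion-free if and only if d_r(A) = 1, where d_r(A) is the r-th determinant divisor of A. -/
/-!
Take a Smith normal form of the column lattice `N = range A ⊆ ℤᵐ`: bases `bM` of `ℤᵐ` and `bN`
of `N` with `bN j = a j • bM (f j)`, the number of `a j` being `rank A = r`. The cokernel is
`ℤᵐ⁻ʳ ⊕ ⨁ ℤ/(a j)`, torsion-free exactly when every `a j` is a unit. On the other side, the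
multilinear expansion of the minors of `C * A` shows `dᵣ(A) ∣ dᵣ(C * A)`; hence `dᵣ` depends only
on the column span and is unchanged by invertible row operations, so that `dᵣ(A)` is `dᵣ` of the
diagonal matrix of the `a j`, namely `|∏ a j|`.
-/

/-- The `i`-th determinant divisor of an integer matrix: the gcd of the absolute
values of all `i × i` minors (with `d_0 = 1`). -/
def detDivisor {m n : ℕ} (A : Matrix (Fin m) (Fin n) ℤ) (i : ℕ) : ℕ :=
  Finset.univ.gcd
    (fun p : {ρ : Fin i → Fin m // Function.Injective ρ} ×
        {σ : Fin i → Fin n // Function.Injective σ} =>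
      ((A.submatrix p.1.1 p.2.1).det).natAbs)

theorem Matrix.det_submatrix_mul {R l m n κ : Type*} [CommRing R] [Fintype m] [Fintype κ]
    [DecidableEq κ] (C : Matrix l m R) (A : Matrix m n R) (ρ : κ → l) (σ : κ → n) :
    ((C * A).submatrix ρ σ).det =
      ∑ d : κ → m, (∏ i, C (ρ i) (d i)) * (A.submatrix d σ).det := by
  have hrows : (C * A).submatrix ρ σ = fun i => ∑ t, C (ρ i) t • fun j => A t (σ j) := by
    ext i j
    simp [Matrix.mul_apply, Finset.sum_apply]
  rw [hrows]
  change Matrix.detRowAlternating _ = _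
  rw [← AlternatingMap.coe_multilinearMap, MultilinearMap.map_sum]
  refine Finset.sum_congr rfl fun d _ => ?_
  rw [MultilinearMap.map_smul_univ, smul_eq_mul]
  rfl

theorem Matrix.exists_mul_eq_of_range_le {R l m n : Type*} [CommRing R] [Fintype n] [Fintype l]
    [DecidableEq l] {A : Matrix m n R} {B : Matrix m l R}
    (h : LinearMap.range B.mulVecLin ≤ LinearMap.range A.mulVecLin) :
    ∃ C : Matrix n l R, A * C = B := by
  have hcol : ∀ j, B.col j ∈ LinearMap.range A.mulVecLin := fun j =>
    h (by rw [Matrix.range_mulVecLin]; exact Submodule.subset_span ⟨j, rfl⟩)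
  choose v hv using hcol
  refine ⟨Matrix.of fun t j => v j t, ?_⟩
  ext i j
  rw [Matrix.mul_apply]
  simpa [Matrix.mulVec, dotProduct] using congrFun (hv j) i

theorem Matrix.range_mulVecLin_of_basis {R ι κ : Type*} [CommRing R] [Fintype κ]
    {N : Submodule R (ι → R)} (b : Module.Basis κ R N) :
    LinearMap.range (Matrix.of fun i j => (b j : ι → R) i).mulVecLin = N := by
  rw [Matrix.range_mulVecLin]
  change Submodule.span R (Set.range (N.subtype ∘ b)) = N
  rw [Set.range_comp, Submodule.span_image, b.span_eq, Submodule.map_top, Submodule.range_subtype]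

section DetDivisor

variable {m n : ℕ}

theorem dvd_detDivisor_iff {A : Matrix (Fin m) (Fin n) ℤ} {r d : ℕ} :
    d ∣ detDivisor A r ↔ ∀ ρ : Fin r → Fin m, Function.Injective ρ →
      ∀ σ : Fin r → Fin n, Function.Injective σ → (d : ℤ) ∣ (A.submatrix ρ σ).det := by
  simp [detDivisor, Finset.dvd_gcd_iff, Int.natCast_dvd]

theorem detDivisor_dvd_det_submatrix (A : Matrix (Fin m) (Fin n) ℤ) {r : ℕ}
    {ρ : Fin r → Fin m} (hρ : Function.Injective ρ) {σ : Fin r → Fin n}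
    (hσ : Function.Injective σ) : (detDivisor A r : ℤ) ∣ (A.submatrix ρ σ).det :=
  dvd_detDivisor_iff.mp dvd_rfl ρ hρ σ hσ

theorem detDivisor_dvd_detDivisor_mul_left {l : ℕ} (C : Matrix (Fin l) (Fin m) ℤ)
    (A : Matrix (Fin m) (Fin n) ℤ) (r : ℕ) : detDivisor A r ∣ detDivisor (C * A) r := by
  refine dvd_detDivisor_iff.mpr fun ρ _ σ hσ => ?_
  rw [Matrix.det_submatrix_mul]
  refine Finset.dvd_sum fun d _ => Dvd.dvd.mul_left ?_ _
  by_cases hd : Function.Injective d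
  · exact detDivisor_dvd_det_submatrix A hd hσ
  · obtain ⟨i, i', hdi, hii'⟩ := Function.not_injective_iff.mp hd
    rw [Matrix.det_zero_of_row_eq hii' (by ext; simp [hdi])]
    exact dvd_zero _

theorem detDivisor_transpose (A : Matrix (Fin m) (Fin n) ℤ) (r : ℕ) :
    detDivisor A.transpose r = detDivisor A r := by
  have hdvd : ∀ {m n : ℕ} (A : Matrix (Fin m) (Fin n) ℤ),
      detDivisor A.transpose r ∣ detDivisor A r :=
    fun A => dvd_detDivisor_iff.mpr fun ρ hρ σ hσ => by
      have h := detDivisor_dvd_det_submatrix A.transpose hσ hρ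
      rwa [← Matrix.transpose_submatrix, Matrix.det_transpose] at h
  exact Nat.dvd_antisymm (hdvd A) (by simpa using hdvd A.transpose)

theorem detDivisor_dvd_detDivisor_mul_right {l : ℕ} (A : Matrix (Fin m) (Fin n) ℤ)
    (C : Matrix (Fin n) (Fin l) ℤ) (r : ℕ) : detDivisor A r ∣ detDivisor (A * C) r := by
  rw [← detDivisor_transpose A, ← detDivisor_transpose (A * C), Matrix.transpose_mul]
  exact detDivisor_dvd_detDivisor_mul_left _ _ r

theorem detDivisor_mul_left_of_isUnit {C : Matrix (Fin m) (Fin m) ℤ} (hC : IsUnit C)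
    (A : Matrix (Fin m) (Fin n) ℤ) (r : ℕ) : detDivisor (C * A) r = detDivisor A r := by
  obtain ⟨C', hC'⟩ := hC.exists_left_inv
  refine Nat.dvd_antisymm ?_ (detDivisor_dvd_detDivisor_mul_left C A r)
  simpa [← Matrix.mul_assoc, hC'] using detDivisor_dvd_detDivisor_mul_left C' (C * A) r

theorem detDivisor_dvd_of_range_le {l : ℕ} {A : Matrix (Fin m) (Fin n) ℤ}
    {B : Matrix (Fin m) (Fin l) ℤ}
    (h : LinearMap.range B.mulVecLin ≤ LinearMap.range A.mulVecLin) (r : ℕ) :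
    detDivisor A r ∣ detDivisor B r := by
  obtain ⟨C, rfl⟩ := Matrix.exists_mul_eq_of_range_le h
  exact detDivisor_dvd_detDivisor_mul_right A C r

theorem detDivisor_eq_of_range_eq {l : ℕ} {A : Matrix (Fin m) (Fin n) ℤ}
    {B : Matrix (Fin m) (Fin l) ℤ}
    (h : LinearMap.range A.mulVecLin = LinearMap.range B.mulVecLin) (r : ℕ) :
    detDivisor A r = detDivisor B r :=
  Nat.dvd_antisymm (detDivisor_dvd_of_range_le h.ge r) (detDivisor_dvd_of_range_le h.le r)

end DetDivisor

def smithMatrix {R ι κ : Type*} [Zero R] [DecidableEq ι] (f : κ ↪ ι) (a : κ → R) :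
    Matrix ι κ R :=
  Matrix.of fun t j => if t = f j then a j else 0

theorem detDivisor_smithMatrix {m k : ℕ} (f : Fin k ↪ Fin m) (a : Fin k → ℤ) :
    detDivisor (smithMatrix f a) k = (∏ j, a j).natAbs := by
  refine Nat.dvd_antisymm ?_ (dvd_detDivisor_iff.mpr fun ρ _ σ hσ => ?_)
  · have h := detDivisor_dvd_det_submatrix (smithMatrix f a) f.injective Function.injective_id
    have hdiag : (smithMatrix f a).submatrix f id = Matrix.diagonal a := by
      ext i j
      by_cases hij : i = j <;> simp [smithMatrix, Matrix.diagonal, hij]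
    rwa [hdiag, Matrix.det_diagonal, Int.natCast_dvd] at h
  · have hdet : ((smithMatrix f a).submatrix ρ σ).det = (∏ j, a (σ j)) *
        (Matrix.of fun i j => if ρ i = f (σ j) then (1 : ℤ) else 0).det := by
      rw [← Matrix.det_mul_row]
      congr
      ext i j
      simp [smithMatrix]
    rw [hdet, Fintype.prod_bijective σ (Finite.injective_iff_bijective.mp hσ) _ a fun _ => rfl,
      Int.natCast_natAbs]
    exact (abs_dvd _ _).mpr (dvd_mul_right _ _)

namespace Module.Basis.SmithNormalForm

variable {R M ι : Type*} [CommRing R] [AddCommGroup M] [Module R M] {N : Submodule R M} {k : ℕ}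
  (snf : Basis.SmithNormalForm N ι k)

theorem bM_mem_iff_isUnit (i : Fin k) : snf.bM (snf.f i) ∈ N ↔ IsUnit (snf.a i) := by
  constructor
  · intro h
    have h1 := snf.repr_apply_embedding_eq_repr_smul ⟨_, h⟩ (i := i)
    simp only [Basis.repr_self, Finsupp.single_eq_same, map_smul, Finsupp.smul_apply,
      smul_eq_mul] at h1
    exact .of_mul_eq_one _ h1.symm
  · intro h
    rw [← Submodule.smul_mem_iff_of_isUnit N h, ← snf.snf]
    exact (snf.bN i).2

theorem mem_of_repr_eq_zero [Fintype ι] (hu : ∀ i, IsUnit (snf.a i)) {x : M}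
    (hx : ∀ t ∉ Set.range snf.f, snf.bM.repr x t = 0) : x ∈ N := by
  rw [← snf.bM.sum_repr x]
  refine Submodule.sum_mem _ fun t _ => ?_
  by_cases ht : t ∈ Set.range snf.f
  · obtain ⟨i, rfl⟩ := ht
    exact N.smul_mem _ ((snf.bM_mem_iff_isUnit i).mpr (hu i))
  · rw [hx t ht, zero_smul]
    exact N.zero_mem

theorem isTorsionFree_quotient_iff [Fintype ι] [IsDomain R] :
    Module.IsTorsionFree R (M ⧸ N) ↔ ∀ i, IsUnit (snf.a i) := by
  constructor
  · intro _ i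
    have ha : snf.a i ≠ 0 := fun h0 => snf.bN.ne_zero i (Subtype.ext (by simp [snf.snf, h0]))
    rw [← snf.bM_mem_iff_isUnit, ← Submodule.Quotient.mk_eq_zero,
      ← smul_eq_zero_iff_right ha, ← Submodule.Quotient.mk_smul, ← snf.snf,
      Submodule.Quotient.mk_eq_zero]
    exact (snf.bN i).2
  · intro hu
    refine .of_smul_eq_zero fun c x hcx => or_iff_not_imp_left.mpr fun hc => ?_
    obtain ⟨x, rfl⟩ := Submodule.Quotient.mk_surjective N x
    rw [← Submodule.Quotient.mk_smul, Submodule.Quotient.mk_eq_zero] at hcx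
    rw [Submodule.Quotient.mk_eq_zero]
    refine snf.mem_of_repr_eq_zero hu fun t ht => ?_
    have h := snf.repr_eq_zero_of_notMem_range ⟨_, hcx⟩ ht
    simp only [map_smul, Finsupp.smul_apply, smul_eq_mul] at h
    exact (mul_eq_zero.mp h).resolve_left hc

end Module.Basis.SmithNormalForm

theorem detDivisor_eq_natAbs_prod {m n k : ℕ} {A : Matrix (Fin m) (Fin n) ℤ}
    (snf : Module.Basis.SmithNormalForm (LinearMap.range A.mulVecLin) (Fin m) k) :
    detDivisor A k = (∏ j, snf.a j).natAbs := by
  let P := (Pi.basisFun ℤ (Fin m)).toMatrix snf.bM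
  have hP : IsUnit P := by
    let := (Pi.basisFun ℤ (Fin m)).invertibleToMatrix snf.bM
    exact isUnit_of_invertible P
  have hcols : P * smithMatrix snf.f snf.a = Matrix.of fun i j => (snf.bN j : Fin m → ℤ) i := by
    ext i j
    simp [P, smithMatrix, Matrix.mul_apply, Module.Basis.toMatrix_apply, snf.snf, mul_comm]
  rw [detDivisor_eq_of_range_eq (Matrix.range_mulVecLin_of_basis snf.bN).symm, ← hcols,
    detDivisor_mul_left_of_isUnit hP, detDivisor_smithMatrix]

theorem statement1_general (m n : ℕ) (A : Matrix (Fin m) (Fin n) ℤ)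
    (r : ℕ) (hr : A.rank = r) :
    (∀ g : (Fin m → ℤ) ⧸ LinearMap.range A.mulVecLin, g ≠ 0 → ¬IsOfFinAddOrder g) ↔
      detDivisor A r = 1 := by
  obtain ⟨k, snf⟩ := (LinearMap.range A.mulVecLin).smithNormalForm (Pi.basisFun ℤ (Fin m))
  obtain rfl : k = r := by
    rw [← hr, Matrix.rank, Module.finrank_eq_card_basis snf.bN, Fintype.card_fin]
  rw [← isAddTorsionFree_iff_not_isOfFinAddOrder,
    ← Module.isTorsionFree_int_iff_isAddTorsionFree, snf.isTorsionFree_quotient_iff,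
    detDivisor_eq_natAbs_prod snf, ← Int.isUnit_iff_natAbs_eq, IsUnit.prod_univ_iff]

/-- For an integer matrix `A` of rank `r ≥ 1`, the cokernel of `A`
is torsion-free iff the `r`-th determinant divisor of `A` equals `1`. -/
theorem statement1 (m n : ℕ) (A : Matrix (Fin m) (Fin n) ℤ)
    (r : ℕ) (hr : A.rank = r) (hr1 : 1 ≤ r) :
    (∀ g : (Fin m → ℤ) ⧸ LinearMap.range A.mulVecLin, g ≠ 0 → ¬IsOfFinAddOrder g) ↔
      detDivisor A r = 1 :=
  statement1_general m n A r hr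
end

section
/- Let A be an m×n integer matrix, P an m×m integer matrix and Q an n×n integer matrix, both invertible over ℤ (their determinants are units of ℤ). Then for every i ∈ ℕ, the i-th determinant divisor of P * A * Q equals the i-th determinant divisor of A: d_i(P * A * Q) = d_i(A). -/
open Matrix

namespace Matrix

variable {R ι l m n o : Type*} [CommRing R] [Fintype ι] [DecidableEq ι]

theorem dvd_det_mul_of_dvd_det_submatrix_rows [Fintype m] (B : Matrix ι m R)
    (C : Matrix m ι R) (d : R)
    (h : ∀ ρ : ι → m, Function.Injective ρ → d ∣ (C.submatrix ρ id).det) :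
    d ∣ (B * C).det := by
  have hrows : (B * C).det = detRowAlternating (fun k => ∑ j, B k j • C j) := by
    congr 1; ext k l; simp [Matrix.mul_apply]
  rw [hrows, ← AlternatingMap.coe_multilinearMap, MultilinearMap.map_sum]
  refine Finset.dvd_sum fun r _ => ?_
  rw [MultilinearMap.map_smul_univ, AlternatingMap.coe_multilinearMap, smul_eq_mul]
  by_cases hr : Function.Injective r
  · exact (h r hr).mul_left _
  · obtain ⟨a, b, hab, hne⟩ := Function.not_injective_iff.mp hr
    rw [AlternatingMap.map_eq_zero_of_eq _ (fun k => C (r k)) (congrArg C hab) hne, mul_zero]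
    exact dvd_zero d

theorem dvd_det_mul_of_dvd_det_submatrix_cols [Fintype m] (B : Matrix ι m R)
    (C : Matrix m ι R) (d : R)
    (h : ∀ σ : ι → m, Function.Injective σ → d ∣ (B.submatrix id σ).det) :
    d ∣ (B * C).det := by
  rw [← det_transpose, transpose_mul]
  exact dvd_det_mul_of_dvd_det_submatrix_rows Cᵀ Bᵀ d fun σ hσ => by
    simpa only [← transpose_submatrix, det_transpose] using h σ hσ

theorem dvd_det_submatrix_mul_mul [Fintype m] [Fintype n] (A : Matrix m n R)
    (P : Matrix l m R) (Q : Matrix n o R) (d : R)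
    (h : ∀ (ρ : ι → m) (σ : ι → n), Function.Injective ρ → Function.Injective σ →
      d ∣ (A.submatrix ρ σ).det)
    (ρ : ι → l) (σ : ι → o) : d ∣ ((P * A * Q).submatrix ρ σ).det := by
  rw [submatrix_mul _ _ _ id _ Function.bijective_id,
    submatrix_mul _ _ _ id _ Function.bijective_id]
  refine dvd_det_mul_of_dvd_det_submatrix_cols _ _ d fun σ' hσ' => ?_
  rw [submatrix_mul _ _ _ id _ Function.bijective_id]
  refine dvd_det_mul_of_dvd_det_submatrix_rows _ _ d fun ρ' hρ' => ?_
  exact h ρ' σ' hρ' hσ'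

end Matrix

theorem natCast_detDivisor_dvd_det_submatrix {m n i : ℕ} (A : Matrix (Fin m) (Fin n) ℤ)
    {ρ : Fin i → Fin m} {σ : Fin i → Fin n} (hρ : Function.Injective ρ)
    (hσ : Function.Injective σ) : (detDivisor A i : ℤ) ∣ (A.submatrix ρ σ).det :=
  Int.natCast_dvd.mpr <| Finset.gcd_dvd (Finset.mem_univ (Subtype.mk ρ hρ, Subtype.mk σ hσ))

theorem detDivisor_dvd_detDivisor_mul_mul {k l m n i : ℕ} (A : Matrix (Fin m) (Fin n) ℤ)
    (P : Matrix (Fin k) (Fin m) ℤ) (Q : Matrix (Fin n) (Fin l) ℤ) :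
    detDivisor A i ∣ detDivisor (P * A * Q) i :=
  Finset.dvd_gcd fun p _ => Int.natCast_dvd.mp <|
    dvd_det_submatrix_mul_mul A P Q _
      (fun _ _ hρ hσ => natCast_detDivisor_dvd_det_submatrix A hρ hσ) p.1.1 p.2.1

/-- Determinant divisors are invariant under multiplication on
either side by matrices invertible over `ℤ`. -/
theorem statement3 (m n : ℕ) (A : Matrix (Fin m) (Fin n) ℤ)
    (P : Matrix (Fin m) (Fin m) ℤ) (Q : Matrix (Fin n) (Fin n) ℤ)
    (hP : IsUnit P.det) (hQ : IsUnit Q.det) (i : ℕ) :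
    detDivisor (P * A * Q) i = detDivisor A i := by
  have hA : P⁻¹ * (P * A * Q) * Q⁻¹ = A := by
    rw [Matrix.mul_assoc, Matrix.mul_assoc, mul_nonsing_inv Q hQ, Matrix.mul_one,
      ← Matrix.mul_assoc, nonsing_inv_mul P hP, Matrix.one_mul]
  refine Nat.dvd_antisymm ?_ (detDivisor_dvd_detDivisor_mul_mul A P Q)
  simpa only [hA] using detDivisor_dvd_detDivisor_mul_mul (P * A * Q) P⁻¹ Q⁻¹ (i := i)
end

section
/- Let A be an m×(n+1) integer matrix, c : Fin (n+1) a column index, and r : Fin m a row index such that A r c = 1 or A r c = −1, and A r' c = 0 for every r' ≠ r. Let A' be the m×n matrix obtained from A by deleting column c. Then every square submatrix of A (i.e., A.submatrix ρ σ for injective ρ : Fin i → Fin m, σ : Fin i → Fin (n+1), any i) has determinant in {−1, 0, 1} if and only if every square submatrix of A' has determinant in {−1, 0, 1}. The analogous statement holds with the roles of rows and columns exchanged. -/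
/-
Up to a reordering of rows, which preserves total unimodularity, a matrix whose row `r` is
`±e_c` is the matrix with row `r` deleted stacked on top of that row. Expanding a minor along
this row shows that it is `0` or `±1` times a minor of the other rows
(`Matrix.fromRows_isTotallyUnimodular_iff_rows`). The column version follows by transposing.
-/

namespace Matrix

variable {m n R : Type*} [CommRing R]

theorem isTotallyUnimodular_iff_det_mem (A : Matrix m n ℤ) :
    A.IsTotallyUnimodular ↔
      ∀ (i : ℕ) (ρ : Fin i → m) (σ : Fin i → n), Function.Injective ρ → Function.Injective σ →
        (A.submatrix ρ σ).det ∈ ({-1, 0, 1} : Set ℤ) := by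
  have hrange : Set.range (SignType.cast : SignType → ℤ) = {-1, 0, 1} := by
    ext x
    constructor
    · rintro ⟨s, rfl⟩
      cases s <;> simp
    · rintro (rfl | rfl | rfl)
      exacts [⟨-1, rfl⟩, ⟨0, rfl⟩, ⟨1, rfl⟩]
  rw [IsTotallyUnimodular, hrange]

theorem isTotallyUnimodular_iff_of_row_eq_single [DecidableEq n] {k : ℕ}
    {A : Matrix (Fin (k + 1)) n R} {r : Fin (k + 1)} {c : n} {s : SignType}
    (hr : A r = Pi.single c (s : R)) :
    A.IsTotallyUnimodular ↔ (A.submatrix r.succAbove id).IsTotallyUnimodular := by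
  let e : Fin (k + 1) ≃ Fin k ⊕ Unit := (finSuccEquiv' r).trans (Equiv.optionEquivSumPUnit _)
  have hsplit : A.reindex e (Equiv.refl n) =
      fromRows (A.submatrix r.succAbove id) (A.submatrix (fun _ : Unit ↦ r) id) := by
    ext (i | _) j <;> simp [e, Equiv.optionEquivSumPUnit]
  rw [← reindex_isTotallyUnimodular A e (Equiv.refl n), hsplit]
  exact fromRows_isTotallyUnimodular_iff_rows fun _ _ ↦ ⟨c, s, hr⟩

theorem isTotallyUnimodular_iff_of_col_eq_single [DecidableEq m] {k : ℕ}
    {A : Matrix m (Fin (k + 1)) R} {r : m} {c : Fin (k + 1)} {s : SignType}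
    (hc : Aᵀ c = Pi.single r (s : R)) :
    A.IsTotallyUnimodular ↔ (A.submatrix id c.succAbove).IsTotallyUnimodular := by
  rw [← transpose_isTotallyUnimodular_iff, isTotallyUnimodular_iff_of_row_eq_single hc,
    ← transpose_isTotallyUnimodular_iff, transpose_submatrix, transpose_transpose]

end Matrix

theorem Pi.exists_signType_eq_single {ι R : Type*} [DecidableEq ι] [Ring R] {v : ι → R} {c : ι}
    (hc : v c = 1 ∨ v c = -1) (hv : ∀ j, j ≠ c → v j = 0) :
    ∃ s : SignType, v = Pi.single c (s : R) := by
  have hsingle : v = Pi.single c (v c) := by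
    funext j
    by_cases hj : j = c
    · subst hj; simp
    · simp [hj, hv j hj]
  rcases hc with h | h
  · exact ⟨1, by rw [hsingle, h, SignType.coe_one]⟩
  · exact ⟨-1, by rw [hsingle, h, SignType.coe_neg, SignType.coe_one]⟩

/-- If a column of an integer matrix has a unique nonzero entry,
equal to `±1`, then all square minors of the matrix lie in `{-1, 0, 1}` iff all
square minors of the matrix with that column deleted lie in `{-1, 0, 1}`; and the
analogous statement holds with the roles of rows and columns exchanged. -/
theorem statement7 (m n : ℕ) :
    (∀ (A : Matrix (Fin m) (Fin (n + 1)) ℤ) (r : Fin m) (c : Fin (n + 1)),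
      (A r c = 1 ∨ A r c = -1) → (∀ r' : Fin m, r' ≠ r → A r' c = 0) →
      ((∀ (i : ℕ) (ρ : Fin i → Fin m) (σ : Fin i → Fin (n + 1)),
          Function.Injective ρ → Function.Injective σ →
          (A.submatrix ρ σ).det ∈ ({-1, 0, 1} : Set ℤ)) ↔
        (∀ (i : ℕ) (ρ : Fin i → Fin m) (σ : Fin i → Fin n),
          Function.Injective ρ → Function.Injective σ →
          ((A.submatrix id c.succAbove).submatrix ρ σ).det ∈ ({-1, 0, 1} : Set ℤ)))) ∧
    (∀ (A : Matrix (Fin (m + 1)) (Fin n) ℤ) (r : Fin (m + 1)) (c : Fin n),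
      (A r c = 1 ∨ A r c = -1) → (∀ c' : Fin n, c' ≠ c → A r c' = 0) →
      ((∀ (i : ℕ) (ρ : Fin i → Fin (m + 1)) (σ : Fin i → Fin n),
          Function.Injective ρ → Function.Injective σ →
          (A.submatrix ρ σ).det ∈ ({-1, 0, 1} : Set ℤ)) ↔
        (∀ (i : ℕ) (ρ : Fin i → Fin m) (σ : Fin i → Fin n),
          Function.Injective ρ → Function.Injective σ →
          ((A.submatrix r.succAbove id).submatrix ρ σ).det ∈ ({-1, 0, 1} : Set ℤ)))) := by
  simp only [← Matrix.isTotallyUnimodular_iff_det_mem]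
  constructor
  · intro A r c hrc hc
    obtain ⟨s, hs⟩ := Pi.exists_signType_eq_single (v := fun i ↦ A i c) hrc hc
    exact Matrix.isTotallyUnimodular_iff_of_col_eq_single hs
  · intro A r c hrc hr
    obtain ⟨s, hs⟩ := Pi.exists_signType_eq_single (v := A r) hrc hr
    exact Matrix.isTotallyUnimodular_iff_of_row_eq_single hs
end

section
/- Let V be a finite type, G : SimpleGraph V a connected graph, and m : V → V → ℕ a symmetric labeling (m i j = m j i for all i, j). Assume there exist vertices u, v with G.Adj u v and m u v even. Suppose x : V → ℤ × ℤ satisfies: for all i, j with G.Adj i j, one has (x i).1 = (x j).1 and (x i).2 = (x j).2, and moreover (x i).1 = (x j).2 whenever additionally m i j is even. Then there exists a : ℤ such that x i = (a, a) for every i : V. -/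
namespace SimpleGraph

variable {V β : Type*} {G : SimpleGraph V}

theorem Reachable.eq_of_forall_adj_eq {f : V → β} (hf : ∀ i j, G.Adj i j → f i = f j)
    {u v : V} (h : G.Reachable u v) : f u = f v := by
  obtain ⟨w⟩ := h
  induction w with
  | nil => rfl
  | cons hadj _ ih => exact (hf _ _ hadj).trans ih

theorem Connected.eq_of_forall_adj_eq (hG : G.Connected) {f : V → β}
    (hf : ∀ i j, G.Adj i j → f i = f j) (u v : V) : f u = f v :=
  (hG u v).eq_of_forall_adj_eq hf

end SimpleGraph

theorem statement8_general (V : Type*) (G : SimpleGraph V) (hG : G.Connected)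
    (m : V → V → ℕ)
    (hedge : ∃ u v : V, G.Adj u v ∧ Even (m u v))
    (x : V → ℤ × ℤ)
    (h1 : ∀ i j : V, G.Adj i j → (x i).1 = (x j).1 ∧ (x i).2 = (x j).2)
    (h2 : ∀ i j : V, G.Adj i j → Even (m i j) → (x i).1 = (x j).2) :
    ∃ a : ℤ, ∀ i : V, x i = (a, a) := by
  have hconst : ∀ i j, x i = x j :=
    hG.eq_of_forall_adj_eq fun i j hij => Prod.ext (h1 i j hij).1 (h1 i j hij).2
  obtain ⟨u, v, huv, heven⟩ := hedge
  have hdiag : (x u).1 = (x u).2 := by rw [h2 u v huv heven, hconst u v]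
  exact ⟨(x u).1, fun i => (hconst i u).trans (Prod.ext rfl hdiag.symm)⟩

/-- On a finite connected graph with a symmetric labeling having at
least one edge with even label, any `ℤ × ℤ`-valued function whose coordinates agree
across every edge, and whose two coordinates agree across edges with even label,
is constant of the form `(a, a)`. -/
theorem statement8 (V : Type*) [Fintype V] (G : SimpleGraph V) (hG : G.Connected)
    (m : V → V → ℕ) (hsym : ∀ i j : V, m i j = m j i)
    (hedge : ∃ u v : V, G.Adj u v ∧ Even (m u v))
    (x : V → ℤ × ℤ)
    (h1 : ∀ i j : V, G.Adj i j → (x i).1 = (x j).1 ∧ (x i).2 = (x j).2)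
    (h2 : ∀ i j : V, G.Adj i j → Even (m i j) → (x i).1 = (x j).2) :
    ∃ a : ℤ, ∀ i : V, x i = (a, a) :=
  statement8_general V G hG m hedge x h1 h2
end

section
/- Let V be a finite type, G : SimpleGraph V a connected graph, and m : V → V → ℕ a symmetric labeling (m i j = m j i for all i, j). Assume there exist vertices u, v with G.Adj u v and m u v even. Let k be a positive integer and β : V → ℤ × ℤ a function such that: for all i, j with G.Adj i j, k divides (β i).1 − (β j).1 and k divides (β i).2 − (β j).2, and moreover k divides (β i).1 − (β j).2 whenever additionally m i j is even. Then there exists c : ℤ such that for every i : V, k divides (β i).1 − c and k divides (β i).2 − c. -/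
theorem SimpleGraph.Reachable.rel_of_adj {V : Type*} {G : SimpleGraph V} {r : V → V → Prop}
    (hr : Equivalence r) (hadj : ∀ i j, G.Adj i j → r i j) {i j : V} (hij : G.Reachable i j) :
    r i j :=
  Relation.reflTransGen_le_of_equivalence_of_le hr hadj i j
    ((G.reachable_iff_reflTransGen i j).1 hij)

theorem SimpleGraph.Preconnected.intModEq_of_adj {V : Type*} {G : SimpleGraph V}
    (hG : G.Preconnected) {k : ℤ} {f : V → ℤ} (hadj : ∀ i j, G.Adj i j → f i ≡ f j [ZMOD k])
    (i j : V) : f i ≡ f j [ZMOD k] :=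
  (hG i j).rel_of_adj (r := fun i j ↦ f i ≡ f j [ZMOD k])
    ⟨fun _ ↦ Int.ModEq.refl _, Int.ModEq.symm, Int.ModEq.trans⟩ hadj

theorem statement9_general (V : Type*) (G : SimpleGraph V) (hG : G.Connected)
    (m : V → V → ℕ)
    (hedge : ∃ u v : V, G.Adj u v ∧ Even (m u v))
    (k : ℤ) (β : V → ℤ × ℤ)
    (h1 : ∀ i j : V, G.Adj i j →
      k ∣ (β i).1 - (β j).1 ∧ k ∣ (β i).2 - (β j).2)
    (h2 : ∀ i j : V, G.Adj i j → Even (m i j) → k ∣ (β i).1 - (β j).2) :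
    ∃ c : ℤ, ∀ i : V, k ∣ (β i).1 - c ∧ k ∣ (β i).2 - c := by
  obtain ⟨u, v, huv, hm⟩ := hedge
  have hfst : ∀ i j, (β i).1 ≡ (β j).1 [ZMOD k] :=
    hG.preconnected.intModEq_of_adj fun i j hij ↦ Int.modEq_iff_dvd.2 (h1 j i hij.symm).1
  have hsnd : ∀ i j, (β i).2 ≡ (β j).2 [ZMOD k] :=
    hG.preconnected.intModEq_of_adj fun i j hij ↦ Int.modEq_iff_dvd.2 (h1 j i hij.symm).2
  have hcross : (β v).2 ≡ (β u).1 [ZMOD k] := Int.modEq_iff_dvd.2 (h2 u v huv hm)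
  exact ⟨(β u).1, fun i ↦ ⟨(hfst u i).dvd, (hcross.symm.trans (hsnd v i)).dvd⟩⟩

/-- On a finite connected graph with a symmetric labeling having at
least one edge with even label, if the coordinates of `β : V → ℤ × ℤ` are congruent
mod `k` across every edge, with the two coordinates congruent across edges of even
label, then all coordinates of `β` are congruent mod `k` to a single integer `c`. -/
theorem statement9 (V : Type*) [Fintype V] (G : SimpleGraph V) (hG : G.Connected)
    (m : V → V → ℕ) (hsym : ∀ i j : V, m i j = m j i)
    (hedge : ∃ u v : V, G.Adj u v ∧ Even (m u v))
    (k : ℤ) (hk : 0 < k) (β : V → ℤ × ℤ)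
    (h1 : ∀ i j : V, G.Adj i j →
      k ∣ (β i).1 - (β j).1 ∧ k ∣ (β i).2 - (β j).2)
    (h2 : ∀ i j : V, G.Adj i j → Even (m i j) → k ∣ (β i).1 - (β j).2) :
    ∃ c : ℤ, ∀ i : V, k ∣ (β i).1 - c ∧ k ∣ (β i).2 - c :=
  statement9_general V G hG m hedge k β h1 h2
end
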